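/- arXiv:2402.12874 — 6 statements merged into one kernel-verified Lean document; each statement's English description precedes it below -/
import Mathlib

section
/- Policy improvement lemma: for any two policies μ and π on a finite MDP, V^μ(s) = V^π(s) + E_μ[∑_{t=0}^∞ γ^t A^π(s_t, a_t) | s_0 = s] for every state s. -/
/-!
Write `T_c` for the Bellman operator of `μ` with per-step reward `c`. Since the advantage is
`A^π = r - (V^π - γ P V^π)`, i.e. `r` minus a potential-based shaping term, `V^π` is a fixed
point of `T_{r - A^π}` for every policy `μ`; by linearity so is `V^μ - W`. Each `T_c` is a
`γ`-contraction in the sup norm, so the two fixed points coincide.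
-/

open Finset

lemma abs_sum_mul_le_of_sum_eq_one {ι : Type*} [Fintype ι] {w f : ι → ℝ} {M : ℝ}
    (hw0 : ∀ i, 0 ≤ w i) (hw1 : ∑ i, w i = 1) (hf : ∀ i, |f i| ≤ M) :
    |∑ i, w i * f i| ≤ M :=
  calc |∑ i, w i * f i| ≤ ∑ i, |w i * f i| := abs_sum_le_sum_abs _ _
    _ ≤ ∑ i, w i * M := sum_le_sum fun i _ => by
        rw [abs_mul, abs_of_nonneg (hw0 i)]
        exact mul_le_mul_of_nonneg_left (hf i) (hw0 i)
    _ = M := by rw [← sum_mul, hw1, one_mul]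

namespace MDP

variable {S A : Type*} [Fintype S] [Fintype A]

def bellman (p : S → A → S → ℝ) (μ : S → A → ℝ) (γ : ℝ) (c : S → A → ℝ) (f : S → ℝ) :
    S → ℝ :=
  fun s => ∑ a, μ s a * (c s a + γ * ∑ s', p s a s' * f s')

variable {p : S → A → S → ℝ} {μ : S → A → ℝ} {γ : ℝ}

lemma bellman_sub (c c' : S → A → ℝ) (f f' : S → ℝ) :
    bellman p μ γ c f - bellman p μ γ c' f' = bellman p μ γ (c - c') (f - f') := by
  ext s
  simp only [bellman, Pi.sub_apply, ← sum_sub_distrib]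
  refine sum_congr rfl fun a _ => ?_
  simp only [mul_sub, sum_sub_distrib]
  ring

lemma bellman_shaping_reward (hμ1 : ∀ s, ∑ a, μ s a = 1) (V : S → ℝ) :
    bellman p μ γ (fun s a => V s - γ * ∑ s', p s a s' * V s') V = V := by
  ext s
  simp only [bellman, sub_add_cancel, ← sum_mul, hμ1, one_mul]

lemma norm_bellman_zero_le (hp0 : ∀ s a s', 0 ≤ p s a s') (hp1 : ∀ s a, ∑ s', p s a s' = 1)
    (hμ0 : ∀ s a, 0 ≤ μ s a) (hμ1 : ∀ s, ∑ a, μ s a = 1) (hγ0 : 0 ≤ γ) (f : S → ℝ) :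
    ‖bellman p μ γ 0 f‖ ≤ γ * ‖f‖ := by
  refine (pi_norm_le_iff_of_nonneg (by positivity)).2 fun s => ?_
  have hf : ∀ s', |f s'| ≤ ‖f‖ := fun s' =>
    (Real.norm_eq_abs _).symm.trans_le (norm_le_pi_norm f s')
  simp only [bellman, Pi.zero_apply, zero_add, mul_left_comm _ γ, ← mul_sum, Real.norm_eq_abs,
    abs_mul, abs_of_nonneg hγ0]
  exact mul_le_mul_of_nonneg_left (abs_sum_mul_le_of_sum_eq_one (hμ0 s) (hμ1 s) fun a =>
    abs_sum_mul_le_of_sum_eq_one (hp0 s a) (hp1 s a) hf) hγ0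

lemma bellman_fixedPoint_unique (hp0 : ∀ s a s', 0 ≤ p s a s')
    (hp1 : ∀ s a, ∑ s', p s a s' = 1) (hμ0 : ∀ s a, 0 ≤ μ s a) (hμ1 : ∀ s, ∑ a, μ s a = 1)
    (hγ0 : 0 ≤ γ) (hγ1 : γ < 1) {c : S → A → ℝ} {f g : S → ℝ}
    (hf : f = bellman p μ γ c f) (hg : g = bellman p μ γ c g) : f = g := by
  have hcontr : ‖f - g‖ ≤ γ * ‖f - g‖ :=
    calc ‖f - g‖ = ‖bellman p μ γ 0 (f - g)‖ := by
          rw [← sub_self c, ← bellman_sub, ← hf, ← hg]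
      _ ≤ γ * ‖f - g‖ := norm_bellman_zero_le hp0 hp1 hμ0 hμ1 hγ0 _
  have : ‖f - g‖ = 0 := by nlinarith [norm_nonneg (f - g)]
  exact sub_eq_zero.1 (norm_eq_zero.1 this)

end MDP

open MDP

theorem policy_improvement_lemma_general {S A : Type*} [Fintype S] [Fintype A]
    (p : S → A → S → ℝ) (r : S → A → ℝ) (γ : ℝ) (hγ0 : 0 ≤ γ) (hγ1 : γ < 1)
    (μ : S → A → ℝ)
    (hp0 : ∀ s a s', 0 ≤ p s a s') (hp1 : ∀ s a, ∑ s', p s a s' = 1)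
    (hμ0 : ∀ s a, 0 ≤ μ s a) (hμ1 : ∀ s, ∑ a, μ s a = 1)
    (Vμ Vπ : S → ℝ) (Adv : S → A → ℝ) (W : S → ℝ)
    (hVμ : ∀ s, Vμ s = ∑ a, μ s a * (r s a + γ * ∑ s', p s a s' * Vμ s'))
    (hA : ∀ s a, Adv s a = r s a + γ * (∑ s', p s a s' * Vπ s') - Vπ s)
    (hW : ∀ s, W s = ∑ a, μ s a * (Adv s a + γ * ∑ s', p s a s' * W s')) :
    ∀ s, Vμ s = Vπ s + W s := by
  have hshaping : r - Adv = fun s a => Vπ s - γ * ∑ s', p s a s' * Vπ s' := by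
    ext s a
    simp only [Pi.sub_apply, hA]
    ring
  have hVπ_fixed : Vπ = bellman p μ γ (r - Adv) Vπ := by
    rw [hshaping, bellman_shaping_reward hμ1]
  have hdiff_fixed : Vμ - W = bellman p μ γ (r - Adv) (Vμ - W) := by
    have hVμ_fixed : Vμ = bellman p μ γ r Vμ := funext hVμ
    have hW_fixed : W = bellman p μ γ Adv W := funext hW
    rw [← bellman_sub, ← hVμ_fixed, ← hW_fixed]
  intro s
  have := congrFun (bellman_fixedPoint_unique hp0 hp1 hμ0 hμ1 hγ0 hγ1 hdiff_fixed hVπ_fixed) s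
  simp only [Pi.sub_apply] at this
  linarith

/-- Policy improvement lemma: V^μ(s) = V^π(s) + E_μ[∑ γ^t A^π(s_t,a_t) | s_0 = s].
The expected discounted sum of advantages W under μ is characterized as the
(unique, since γ ∈ [0,1)) fixed point of the Bellman operator of μ with reward A^π. -/
theorem policy_improvement_lemma {S A : Type*} [Fintype S] [Fintype A]
    (p : S → A → S → ℝ) (r : S → A → ℝ) (γ : ℝ) (hγ0 : 0 ≤ γ) (hγ1 : γ < 1)
    (μ π : S → A → ℝ)
    (hp0 : ∀ s a s', 0 ≤ p s a s') (hp1 : ∀ s a, ∑ s', p s a s' = 1)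
    (hμ0 : ∀ s a, 0 ≤ μ s a) (hμ1 : ∀ s, ∑ a, μ s a = 1)
    (hπ0 : ∀ s a, 0 ≤ π s a) (hπ1 : ∀ s, ∑ a, π s a = 1)
    (Vμ Vπ : S → ℝ) (Adv : S → A → ℝ) (W : S → ℝ)
    (hVμ : ∀ s, Vμ s = ∑ a, μ s a * (r s a + γ * ∑ s', p s a s' * Vμ s'))
    (hVπ : ∀ s, Vπ s = ∑ a, π s a * (r s a + γ * ∑ s', p s a s' * Vπ s'))
    (hA : ∀ s a, Adv s a = r s a + γ * (∑ s', p s a s' * Vπ s') - Vπ s)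
    (hW : ∀ s, W s = ∑ a, μ s a * (Adv s a + γ * ∑ s', p s a s' * W s')) :
    ∀ s, Vμ s = Vπ s + W s :=
  policy_improvement_lemma_general p r γ hγ0 hγ1 μ hp0 hp1 hμ0 hμ1 Vμ Vπ Adv W hVμ hA hW
end

section
/- Zero loss at the true solution: for any behavior policy μ, target policy π, and backup length n, the Off-policy DAE objective L(Â,B̂,V̂) = E_μ[(∑_{t=0}^n γ^t (r_t − Â_t − γ B̂_t) + γ^{n+1} V̂(s_{n+1}) − V̂(s_0))²] evaluated at (A^π, B^π, V^π) equals 0, and (A^π, B^π, V^π) satisfy the constraints ∑_a π(a|s) Â(s,a)=0 and ∑_{s'} p(s'|s,a) B̂(s,a,s')=0. -/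
/-! At the true solution the step-`t` term `γ^t (r_t - A^π_t - γ B^π_t)` equals
`γ^t V^π(s_t) - γ^(t+1) V^π(s_(t+1))`, so the residual telescopes to zero on every trajectory.
Both constraints say that deviations from a weighted mean (of `Q^π(s, ·)` under `π(·|s)`,
of `V^π` under `p(·|s,a)`) have weighted mean zero. -/

open Finset

theorem sum_range_pow_mul_sub_mul_succ {R : Type*} [CommRing R] (γ : R) (v : ℕ → R) (n : ℕ) :
    ∑ t ∈ range (n + 1), γ ^ t * (v t - γ * v (t + 1)) = v 0 - γ ^ (n + 1) * v (n + 1) := by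
  have hterm : ∀ t, γ ^ t * (v t - γ * v (t + 1)) = γ ^ t * v t - γ ^ (t + 1) * v (t + 1) :=
    fun t => by ring
  simp only [hterm]
  simpa using sum_range_sub' (fun t => γ ^ t * v t) (n + 1)

theorem sum_mul_sub_eq_zero_of_sum_eq_one {ι R : Type*} [Fintype ι] [CommRing R]
    {w f : ι → R} {c : R} (hw : ∑ i, w i = 1) (hc : ∑ i, w i * f i = c) :
    ∑ i, w i * (f i - c) = 0 := by
  simp only [mul_sub, sum_sub_distrib, ← sum_mul, hw, hc, one_mul, sub_self]

/-- Zero loss at the true solution: the Off-policy DAE residual vanishes on every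
trajectory (hence the loss under any behavior policy μ is zero), and
(A^π, B^π, V^π) satisfy the constraints. -/
theorem offpolicy_dae_zero_loss {S A : Type*} [Fintype S] [Fintype A]
    (p : S → A → S → ℝ) (r : S → A → ℝ) (γ : ℝ) (π : S → A → ℝ)
    (hπ : ∀ s, ∑ a, π s a = 1) (hp : ∀ s a, ∑ s', p s a s' = 1)
    (V : S → ℝ) (Adv : S → A → ℝ) (B : S → A → S → ℝ)
    (hV : ∀ s, V s = ∑ a, π s a * (r s a + γ * ∑ s', p s a s' * V s'))
    (hA : ∀ s a, Adv s a = r s a + γ * (∑ s', p s a s' * V s') - V s)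
    (hB : ∀ s a s', B s a s' = V s' - ∑ s'', p s a s'' * V s'')
    (n : ℕ) :
    (∀ (s : ℕ → S) (a : ℕ → A),
        (∑ t ∈ Finset.range (n + 1),
            γ ^ t * (r (s t) (a t) - Adv (s t) (a t) - γ * B (s t) (a t) (s (t + 1))))
          + γ ^ (n + 1) * V (s (n + 1)) - V (s 0) = 0) ∧
    (∀ s, ∑ a, π s a * Adv s a = 0) ∧
    (∀ s a, ∑ s', p s a s' * B s a s' = 0) := by
  refine ⟨fun s a => ?_, fun s => ?_, fun s a => ?_⟩
  · have hstep : ∀ t, r (s t) (a t) - Adv (s t) (a t) - γ * B (s t) (a t) (s (t + 1))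
        = V (s t) - γ * V (s (t + 1)) := fun t => by rw [hA, hB]; ring
    simp only [hstep, sum_range_pow_mul_sub_mul_succ γ (fun t => V (s t))]
    ring
  · simp only [hA]
    exact sum_mul_sub_eq_zero_of_sum_eq_one (hπ s) (hV s).symm
  · simp only [hB]
    exact sum_mul_sub_eq_zero_of_sum_eq_one (hp s a) rfl
end

section
/- Counterexample solution: in the two-state MDP where state 1 transitions with probability 1/2 each to state 2 or to termination (reward 0), and state 2 has actions u (reward 1) and d (reward 0) both terminal, the minimizer of the uncorrected DAE loss L(Â,V̂) = (1/2)μ(u|2)(1−Â(2,u)−V̂(1))² + (1/2)μ(d|2)(0−Â(2,d)−V̂(1))² + (1/2)(0−V̂(1))² subject to ∑_a π(a|2)Â(2,a)=0 satisfies V*(1) = π(u|2) / (1 + π(u|2)²/μ(u|2) + π(d|2)²/μ(d|2)). -/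
/-!
Perturbing the minimiser in the direction of `V̂(1)`, and inside the constraint plane along
`(π(d|2), -π(u|2))`, gives two stationarity conditions. Together with `π(u|2) + π(d|2) = 1`
they say that the weighted residuals `μ(a|2) (r(a) - Â(2,a) - V̂(1))` equal `π(a|2) V̂(1)`:
the Lagrange multiplier of the constraint is `V̂(1)` itself. Solving for `Â(2,a)` and
substituting into the constraint gives `π(u|2) = V̂(1) (1 + π(u|2)²/μ(u|2) + π(d|2)²/μ(d|2))`.
-/

lemma eq_zero_of_forall_mul_add_mul_sq_nonneg {g c : ℝ} (h : ∀ t : ℝ, 0 ≤ g * t + c * t ^ 2) :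
    g = 0 := by
  have hmin : IsLocalMin (fun t : ℝ => g * t + c * t ^ 2) 0 :=
    Filter.Eventually.of_forall fun t => by simpa using h t
  have hderiv : HasDerivAt (fun t : ℝ => g * t + c * t ^ 2) (g * 1 + c * (2 * 0 ^ 1)) 0 :=
    ((hasDerivAt_id' 0).const_mul g).add ((hasDerivAt_pow 2 0).const_mul c)
  simpa using hmin.hasDerivAt_eq_zero hderiv

/-- Squared errors of the three trajectories from state 1 (via `u`, via `d`, terminating),
weighted by their probabilities under `μ`. -/
noncomputable def daeLoss (μu μd V Au Ad : ℝ) : ℝ :=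
  (1/2) * μu * (1 - Au - V) ^ 2 + (1/2) * μd * (0 - Ad - V) ^ 2 + (1/2) * (0 - V) ^ 2

section Stationarity

variable (μu μd V Au Ad : ℝ)

lemma daeLoss_add_value (t : ℝ) :
    daeLoss μu μd (V + t) Au Ad = daeLoss μu μd V Au Ad
      + (V - μu * (1 - Au - V) - μd * (-Ad - V)) * t + ((μu + μd + 1) / 2) * t ^ 2 := by
  unfold daeLoss; ring

lemma daeLoss_add_advantage (πu πd t : ℝ) :
    daeLoss μu μd V (Au + t * πd) (Ad - t * πu) = daeLoss μu μd V Au Ad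
      + (πu * (μd * (-Ad - V)) - πd * (μu * (1 - Au - V))) * t
      + ((μu * πd ^ 2 + μd * πu ^ 2) / 2) * t ^ 2 := by
  unfold daeLoss; ring

variable {μu μd V Au Ad}

lemma weighted_residuals_eq_of_isMin {πu πd : ℝ} (hπ : πu + πd = 1)
    (hconstr : πu * Au + πd * Ad = 0)
    (hmin : ∀ V' Au' Ad' : ℝ, πu * Au' + πd * Ad' = 0 →
      daeLoss μu μd V Au Ad ≤ daeLoss μu μd V' Au' Ad') :
    μu * (1 - Au - V) = πu * V ∧ μd * (-Ad - V) = πd * V := by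
  have hvalue : V - μu * (1 - Au - V) - μd * (-Ad - V) = 0 := by
    refine eq_zero_of_forall_mul_add_mul_sq_nonneg (c := (μu + μd + 1) / 2) fun t => ?_
    have := hmin (V + t) Au Ad hconstr
    rw [daeLoss_add_value] at this
    linarith
  have hadvantage : πu * (μd * (-Ad - V)) - πd * (μu * (1 - Au - V)) = 0 := by
    refine eq_zero_of_forall_mul_add_mul_sq_nonneg
      (c := (μu * πd ^ 2 + μd * πu ^ 2) / 2) fun t => ?_
    have := hmin V (Au + t * πd) (Ad - t * πu) (by linear_combination hconstr)
    rw [daeLoss_add_advantage] at this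
    linarith
  constructor
  · linear_combination -πu * hvalue - hadvantage - μu * (1 - Au - V) * hπ
  · linear_combination -πd * hvalue + hadvantage - μd * (-Ad - V) * hπ

end Stationarity

theorem uncorrected_dae_counterexample_general (μu μd πu πd : ℝ)
    (hμu : 0 < μu) (hμd : 0 < μd)
    (hπ : πu + πd = 1)
    (V Au Ad : ℝ)
    (hconstr : πu * Au + πd * Ad = 0)
    (hmin : ∀ V' Au' Ad' : ℝ, πu * Au' + πd * Ad' = 0 →
      (1/2) * μu * (1 - Au - V) ^ 2 + (1/2) * μd * (0 - Ad - V) ^ 2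
          + (1/2) * (0 - V) ^ 2
        ≤ (1/2) * μu * (1 - Au' - V') ^ 2 + (1/2) * μd * (0 - Ad' - V') ^ 2
          + (1/2) * (0 - V') ^ 2) :
    V = πu / (1 + πu ^ 2 / μu + πd ^ 2 / μd) := by
  obtain ⟨hu, hd⟩ := weighted_residuals_eq_of_isMin hπ hconstr hmin
  have hdenom : 0 < 1 + πu ^ 2 / μu + πd ^ 2 / μd := by positivity
  rw [eq_div_iff hdenom.ne']
  field_simp
  linear_combination -(μu * μd) * hconstr - πu * μd * hu - πd * μu * hd - μu * μd * V * hπ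

/-- Counterexample: the constrained minimizer of the uncorrected DAE loss in the
two-state MDP satisfies V*(1) = π(u)/(1 + π(u)²/μ(u) + π(d)²/μ(d)). -/
theorem uncorrected_dae_counterexample (μu μd πu πd : ℝ)
    (hμu : 0 < μu) (hμd : 0 < μd) (hμ : μu + μd = 1)
    (hπu : 0 ≤ πu) (hπd : 0 ≤ πd) (hπ : πu + πd = 1)
    (V Au Ad : ℝ)
    (hconstr : πu * Au + πd * Ad = 0)
    (hmin : ∀ V' Au' Ad' : ℝ, πu * Au' + πd * Ad' = 0 →
      (1/2) * μu * (1 - Au - V) ^ 2 + (1/2) * μd * (0 - Ad - V) ^ 2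
          + (1/2) * (0 - V) ^ 2
        ≤ (1/2) * μu * (1 - Au' - V') ^ 2 + (1/2) * μd * (0 - Ad' - V') ^ 2
          + (1/2) * (0 - V') ^ 2) :
    V = πu / (1 + πu ^ 2 / μu + πd ^ 2 / μd) :=
  uncorrected_dae_counterexample_general μu μd πu πd hμu hμd hπ V Au Ad hconstr hmin
end

section
/- In the counterexample MDP, if μ ≠ π (both with full support on {u,d}), then V*(1) ≠ V^π(1), i.e., uncorrected DAE is biased: π(u|2)/(1 + π(u|2)²/μ(u|2) + π(d|2)²/μ(d|2)) ≠ π(u|2)/2 whenever π(u|2) ∈ (0,1) and μ ≠ π. -/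
theorem add_sq_div_lt_sq_div_add_sq_div {a b x y : ℝ} (hx : 0 < x) (hy : 0 < y)
    (h : a * y ≠ b * x) : (a + b) ^ 2 / (x + y) < a ^ 2 / x + b ^ 2 / y := by
  have gap : a ^ 2 / x + b ^ 2 / y - (a + b) ^ 2 / (x + y) =
      (a * y - b * x) ^ 2 / (x * y * (x + y)) := by
    field_simp
    ring
  have hne : a * y - b * x ≠ 0 := sub_ne_zero.mpr h
  have : 0 < (a * y - b * x) ^ 2 / (x * y * (x + y)) := by positivity
  linarith

theorem one_lt_sq_div_add_sq_div_of_ne {μu μd πu πd : ℝ} (hμu : 0 < μu) (hμd : 0 < μd)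
    (hμ : μu + μd = 1) (hπ : πu + πd = 1) (hne : (μu, μd) ≠ (πu, πd)) :
    1 < πu ^ 2 / μu + πd ^ 2 / μd := by
  have not_proportional : πu * μd ≠ πd * μu := by
    intro h
    have hu : μu = πu := by linear_combination -h + πu * hμ - μu * hπ
    exact hne (Prod.ext hu (by linarith))
  simpa [hμ, hπ] using add_sq_div_lt_sq_div_add_sq_div hμu hμd not_proportional

theorem uncorrected_dae_biased_general (μu μd πu πd : ℝ)
    (hμu : 0 < μu) (hμd : 0 < μd) (hμ : μu + μd = 1)
    (hπu : 0 < πu) (hπ : πu + πd = 1)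
    (hne : (μu, μd) ≠ (πu, πd)) :
    πu / (1 + πu ^ 2 / μu + πd ^ 2 / μd) ≠ πu / 2 := by
  have hgt := one_lt_sq_div_add_sq_div_of_ne hμu hμd hμ hπ hne
  intro h
  have : 1 + πu ^ 2 / μu + πd ^ 2 / μd = 2 := by
    simpa [div_eq_mul_inv, hπu.ne'] using h
  linarith

/-- In the counterexample MDP, if μ ≠ π then the uncorrected DAE estimate is
biased: V*(1) ≠ V^π(1) = π(u)/2. -/
theorem uncorrected_dae_biased (μu μd πu πd : ℝ)
    (hμu : 0 < μu) (hμd : 0 < μd) (hμ : μu + μd = 1)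
    (hπu : 0 < πu) (hπu1 : πu < 1) (hπ : πu + πd = 1)
    (hne : (μu, μd) ≠ (πu, πd)) :
    πu / (1 + πu ^ 2 / μu + πd ^ 2 / μd) ≠ πu / 2 :=
  uncorrected_dae_biased_general μu μd πu πd hμu hμd hμ hπu hπ hne
end

section
/- In the exact finite MDP setting, conditional variance of the 1-step return decomposes: Var(r(s,a_0) + γ V^π(s_1) | s_0=s) = Var_a(A^π(s,a)) + γ² E_a[Var_{s'}(B^π(s,a,s'))], where a ∼ π(·|s) and s' ∼ p(·|s,a); i.e., the variance of the bootstrapped return splits into a skill part and a luck part. -/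
/-!
Fix the state `s`. For each action `a` the one-step TD error splits as
`r(s,a) + γ V(s') - V(s) = A(s,a) + γ B(s,a,s')`, where the first term does not depend on `s'`
and the second is centered under `p(·|s,a)`. Hence the cross term vanishes in the second moment
over `s'`, leaving `A(s,a)² + γ² E_{s'}[B(s,a,s')²]`; averaging over `a ∼ π(·|s)` gives the claim.
-/

open Finset

theorem sum_mul_sub_weightedMean_eq_zero {ι R : Type*} [CommRing R] {s : Finset ι}
    {w : ι → R} (hw : ∑ i ∈ s, w i = 1) (f : ι → R) :
    ∑ i ∈ s, w i * (f i - ∑ j ∈ s, w j * f j) = 0 := by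
  simp only [mul_sub, sum_sub_distrib, ← sum_mul, hw, one_mul, sub_self]

theorem sum_mul_add_mul_sq_of_centered {ι R : Type*} [CommRing R] {s : Finset ι}
    {w f : ι → R} (hw : ∑ i ∈ s, w i = 1) (hf : ∑ i ∈ s, w i * f i = 0) (c k : R) :
    ∑ i ∈ s, w i * (c + k * f i) ^ 2 = c ^ 2 + k ^ 2 * ∑ i ∈ s, w i * f i ^ 2 := by
  calc ∑ i ∈ s, w i * (c + k * f i) ^ 2
      = c ^ 2 * ∑ i ∈ s, w i + 2 * c * k * ∑ i ∈ s, w i * f i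
          + k ^ 2 * ∑ i ∈ s, w i * f i ^ 2 := by
        simp only [mul_sum, ← sum_add_distrib]
        exact sum_congr rfl fun i _ => by ring
    _ = c ^ 2 + k ^ 2 * ∑ i ∈ s, w i * f i ^ 2 := by rw [hw, hf]; ring

theorem skill_luck_variance_decomposition_general {S A : Type*} [Fintype S] [Fintype A]
    (p : S → A → S → ℝ) (r : S → A → ℝ) (γ : ℝ) (π : S → A → ℝ)
    (hp : ∀ s a, ∑ s', p s a s' = 1)
    (V : S → ℝ) (Adv : S → A → ℝ) (B : S → A → S → ℝ)
    (hA : ∀ s a, Adv s a = r s a + γ * (∑ s', p s a s' * V s') - V s)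
    (hB : ∀ s a s', B s a s' = V s' - ∑ s'', p s a s'' * V s'') :
    ∀ s, ∑ a, π s a * ∑ s', p s a s' * (r s a + γ * V s' - V s) ^ 2
      = (∑ a, π s a * (Adv s a) ^ 2)
        + γ ^ 2 * ∑ a, π s a * ∑ s', p s a s' * (B s a s') ^ 2 := by
  intro s
  have hsplit : ∀ a s', r s a + γ * V s' - V s = Adv s a + γ * B s a s' := by
    intro a s'
    rw [hA, hB]
    ring
  have hcentered : ∀ a, ∑ s', p s a s' * B s a s' = 0 := by
    intro a
    simp only [hB]
    exact sum_mul_sub_weightedMean_eq_zero (hp s a) V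
  calc ∑ a, π s a * ∑ s', p s a s' * (r s a + γ * V s' - V s) ^ 2
      = ∑ a, π s a * ((Adv s a) ^ 2 + γ ^ 2 * ∑ s', p s a s' * (B s a s') ^ 2) := by
        simp only [hsplit]
        exact sum_congr rfl fun a _ => by
          rw [sum_mul_add_mul_sq_of_centered (hp s a) (hcentered a)]
    _ = _ := by simp only [mul_add, sum_add_distrib, mul_left_comm _ (γ ^ 2), ← mul_sum]

/-- Variance decomposition of the bootstrapped 1-step return into a skill part
(variance of A^π over actions) and a luck part (expected variance of B^π over
next states). By the Bellman equation the conditional mean of r(s,a) + γ V^π(s')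
is V^π(s), and A^π, B^π are centered, so the sums below are the variances. -/
theorem skill_luck_variance_decomposition {S A : Type*} [Fintype S] [Fintype A]
    (p : S → A → S → ℝ) (r : S → A → ℝ) (γ : ℝ) (π : S → A → ℝ)
    (hπ : ∀ s, ∑ a, π s a = 1) (hp : ∀ s a, ∑ s', p s a s' = 1)
    (V : S → ℝ) (Adv : S → A → ℝ) (B : S → A → S → ℝ)
    (hV : ∀ s, V s = ∑ a, π s a * (r s a + γ * ∑ s', p s a s' * V s'))
    (hA : ∀ s a, Adv s a = r s a + γ * (∑ s', p s a s' * V s') - V s)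
    (hB : ∀ s a s', B s a s' = V s' - ∑ s'', p s a s'' * V s'') :
    ∀ s, ∑ a, π s a * ∑ s', p s a s' * (r s a + γ * V s' - V s) ^ 2
      = (∑ a, π s a * (Adv s a) ^ 2)
        + γ ^ 2 * ∑ a, π s a * ∑ s', p s a s' * (B s a s') ^ 2 :=
  skill_luck_variance_decomposition_general p r γ π hp V Adv B hA hB
end

section
/- In the four-state example MDP (states 1,2 lead deterministically to state 3 with reward 0; state 3 has actions u,d leading to terminal state 4 with rewards 1,0; γ=1), the DAE solution (when n_1, n_2 > 0) pools data across starting states: the DAE estimate of A(3,u) depends on all n_{1,u}+n_{2,u}+n_{1,d}+n_{2,d} trajectories, and satisfies the normal equations (n_{1,u}−n_{1,d})Â + n_1 V̂_1 = n_{1,u}, (n_{2,u}−n_{2,d})Â + n_2 V̂_2 = n_{2,u}, (n_{1,u}+n_{2,u})Â + n_{1,u} V̂_1 + n_{2,u} V̂_2 = n_{1,u}+n_{2,u}, where Â := Â(3,u) and the constraint gives Â(3,d) = −Â. -/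
/-!
Each normal equation says that the loss has zero slope at the minimizer along one direction:
moving `V̂₁` alone, moving `V̂₂` alone, and moving `Â, V̂₁, V̂₂` together by the same amount. The
last move leaves every `d`-residual `Â − V̂ᵢ` unchanged, so only the `u`-trajectories of both
starting states contribute, which yields the pooled third equation. Along each direction the loss
is a quadratic in the step `t` minimized at `t = 0`, so its linear coefficient vanishes: otherwise
the discriminant would be positive.
-/

theorem linear_coeff_eq_zero_of_forall_nonneg {K : Type*} [Field K] [LinearOrder K]
    [IsStrictOrderedRing K] {a b : K} (h : ∀ t : K, 0 ≤ a * (t * t) + b * t) : b = 0 := by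
  have hdiscrim : discrim a b 0 ≤ 0 := discrim_le_zero fun t => by simpa using h t
  rw [discrim, mul_zero, sub_zero] at hdiscrim
  exact pow_eq_zero_iff two_ne_zero |>.mp (le_antisymm hdiscrim (sq_nonneg b))

theorem dae_four_state_normal_equations_general (n1u n1d n2u n2d : ℝ)
    (Ahat V1 V2 : ℝ)
    (hmin : ∀ A' V1' V2' : ℝ,
      n1u * (1 - Ahat - V1) ^ 2 + n1d * (0 - (-Ahat) - V1) ^ 2
          + n2u * (1 - Ahat - V2) ^ 2 + n2d * (0 - (-Ahat) - V2) ^ 2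
        ≤ n1u * (1 - A' - V1') ^ 2 + n1d * (0 - (-A') - V1') ^ 2
          + n2u * (1 - A' - V2') ^ 2 + n2d * (0 - (-A') - V2') ^ 2) :
    (n1u - n1d) * Ahat + (n1u + n1d) * V1 = n1u ∧
    (n2u - n2d) * Ahat + (n2u + n2d) * V2 = n2u ∧
    (n1u + n2u) * Ahat + n1u * V1 + n2u * V2 = n1u + n2u := by
  have slope_V1 := linear_coeff_eq_zero_of_forall_nonneg (a := n1u + n1d)
    (b := 2 * ((n1u - n1d) * Ahat + (n1u + n1d) * V1 - n1u))
    fun t => by linear_combination hmin Ahat (V1 + t) V2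
  have slope_V2 := linear_coeff_eq_zero_of_forall_nonneg (a := n2u + n2d)
    (b := 2 * ((n2u - n2d) * Ahat + (n2u + n2d) * V2 - n2u))
    fun t => by linear_combination hmin Ahat V1 (V2 + t)
  have slope_diag := linear_coeff_eq_zero_of_forall_nonneg (a := 4 * (n1u + n2u))
    (b := 4 * ((n1u + n2u) * Ahat + n1u * V1 + n2u * V2 - (n1u + n2u)))
    fun t => by linear_combination hmin (Ahat + t) (V1 + t) (V2 + t)
  exact ⟨by linarith, by linarith, by linarith⟩

/-- In the four-state example MDP (γ = 1, uniform sampling policy, constraint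
Â(3,d) = −Â(3,u)), any minimizer (Â, V̂₁, V̂₂) of the DAE loss
L = ∑_{i,a} n_{i,a} (r_a − Â(3,a) − V̂_i)² satisfies the stated normal equations,
which pool the data from all n_{1,u}+n_{1,d}+n_{2,u}+n_{2,d} trajectories. -/
theorem dae_four_state_normal_equations (n1u n1d n2u n2d : ℝ)
    (h1u : 0 ≤ n1u) (h1d : 0 ≤ n1d) (h2u : 0 ≤ n2u) (h2d : 0 ≤ n2d)
    (hn1 : 0 < n1u + n1d) (hn2 : 0 < n2u + n2d)
    (Ahat V1 V2 : ℝ)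
    (hmin : ∀ A' V1' V2' : ℝ,
      n1u * (1 - Ahat - V1) ^ 2 + n1d * (0 - (-Ahat) - V1) ^ 2
          + n2u * (1 - Ahat - V2) ^ 2 + n2d * (0 - (-Ahat) - V2) ^ 2
        ≤ n1u * (1 - A' - V1') ^ 2 + n1d * (0 - (-A') - V1') ^ 2
          + n2u * (1 - A' - V2') ^ 2 + n2d * (0 - (-A') - V2') ^ 2) :
    (n1u - n1d) * Ahat + (n1u + n1d) * V1 = n1u ∧
    (n2u - n2d) * Ahat + (n2u + n2d) * V2 = n2u ∧
    (n1u + n2u) * Ahat + n1u * V1 + n2u * V2 = n1u + n2u :=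
  dae_four_state_normal_equations_general n1u n1d n2u n2d Ahat V1 V2 hmin
end
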